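/- For a triangle-free graph G on n vertices with at least one edge, n/(n − √(s⁺)) ≤ ω(G), where ω(G) is the clique number and s⁺ is the sum of squares of the positive adjacency eigenvalues. -/

import Mathlib

/-!
Since `G` has no triangles, `∑ μᵢ³ = tr A³ = 0`, so `μ₁³` is at most the sum of the cubes `|μᵢ|³`
of the nonpositive eigenvalues, which is at most `(s⁻)^{3/2}` for `s⁻` the sum of their squares;
hence `μ₁² ≤ s⁻`. The Rayleigh quotient of the all-ones vector gives `s⁺ + s⁻ = tr A² = 2|E| ≤ n μ₁`,
so `s⁺ ≤ n μ₁ - μ₁² ≤ n² / 4`. Thus `√s⁺ ≤ n / 2`, the left-hand side is at most `2`, and an edge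
is a clique of size `2`.
-/

open Finset Matrix

theorem Finset.sum_abs_pow_three_le_sqrt_mul_sum_sq {ι : Type*} (s : Finset ι) (e : ι → ℝ) :
    ∑ i ∈ s, |e i| ^ 3 ≤ √(∑ i ∈ s, e i ^ 2) * ∑ i ∈ s, e i ^ 2 := by
  rw [mul_sum]
  refine sum_le_sum fun i hi => ?_
  have habs : |e i| ≤ √(∑ j ∈ s, e j ^ 2) :=
    Real.abs_le_sqrt <| single_le_sum (f := fun j => e j ^ 2) (fun j _ => sq_nonneg _) hi
  calc |e i| ^ 3 = |e i| * e i ^ 2 := by rw [pow_succ', sq_abs]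
    _ ≤ _ := mul_le_mul_of_nonneg_right habs (sq_nonneg _)

section CubeSum

variable {ι : Type*} [Fintype ι] {e : ι → ℝ}

theorem sq_le_sum_sq_nonpos_of_sum_pow_three_eq_zero (h3 : ∑ i, e i ^ 3 = 0) (j : ι) :
    e j ^ 2 ≤ ∑ i ∈ univ.filter (fun i => ¬ 0 < e i), e i ^ 2 := by
  set N := univ.filter (fun i => ¬ 0 < e i)
  by_cases hpos : 0 < e j
  swap
  · exact single_le_sum (f := fun i => e i ^ 2) (fun i _ => sq_nonneg _) (by simpa [N] using hpos)
  have hN : ∑ i ∈ N, |e i| ^ 3 = -∑ i ∈ N, e i ^ 3 := by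
    rw [← sum_neg_distrib]
    refine sum_congr rfl fun i hi => ?_
    rw [abs_of_nonpos (not_lt.mp (mem_filter.mp hi).2)]
    ring
  have hsplit := sum_filter_add_sum_filter_not univ (fun i => 0 < e i) (fun i => e i ^ 3)
  have hcube : e j ^ 3 ≤ √(∑ i ∈ N, e i ^ 2) ^ 3 := calc
    e j ^ 3 ≤ ∑ i ∈ univ.filter (fun i => 0 < e i), e i ^ 3 :=
      single_le_sum (f := fun i => e i ^ 3) (fun i hi => (pow_pos (mem_filter.mp hi).2 3).le)
        (by simpa using hpos)
    _ = ∑ i ∈ N, |e i| ^ 3 := by linarith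
    _ ≤ √(∑ i ∈ N, e i ^ 2) * ∑ i ∈ N, e i ^ 2 := N.sum_abs_pow_three_le_sqrt_mul_sum_sq e
    _ = √(∑ i ∈ N, e i ^ 2) ^ 3 := by
      rw [pow_succ', Real.sq_sqrt (sum_nonneg fun i _ => sq_nonneg _)]
  have hle := le_of_pow_le_pow_left₀ three_ne_zero (Real.sqrt_nonneg _) hcube
  calc e j ^ 2 ≤ √(∑ i ∈ N, e i ^ 2) ^ 2 := pow_le_pow_left₀ hpos.le hle 2
    _ = _ := Real.sq_sqrt (sum_nonneg fun i _ => sq_nonneg _)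

theorem sum_sq_pos_le_of_sum_pow_three_eq_zero {c : ℝ} (h3 : ∑ i, e i ^ 3 = 0) {j : ι}
    (h2 : ∑ i, e i ^ 2 ≤ c * e j) :
    ∑ i ∈ univ.filter (fun i => 0 < e i), e i ^ 2 ≤ c ^ 2 / 4 := by
  have hsplit := sum_filter_add_sum_filter_not univ (fun i => 0 < e i) (fun i => e i ^ 2)
  have hneg := sq_le_sum_sq_nonpos_of_sum_pow_three_eq_zero h3 j
  nlinarith [sq_nonneg (c / 2 - e j)]

end CubeSum

namespace Matrix.IsHermitian

variable {n : Type*} [Fintype n] [DecidableEq n]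

theorem trace_pow {𝕜 : Type*} [RCLike 𝕜] {A : Matrix n n 𝕜} (hA : A.IsHermitian) (k : ℕ) :
    (A ^ k).trace = ∑ i, (hA.eigenvalues i : 𝕜) ^ k := by
  conv_lhs => rw [hA.spectral_theorem, ← map_pow, Unitary.conjStarAlgAut_apply, trace_mul_cycle,
    Unitary.coe_star_mul_self, one_mul, diagonal_pow, trace_diagonal]
  rfl

open scoped MatrixOrder in
theorem dotProduct_mulVec_le {A : Matrix n n ℝ} (hA : A.IsHermitian) {L : ℝ}
    (hL : ∀ i, hA.eigenvalues i ≤ L) (x : n → ℝ) : x ⬝ᵥ A *ᵥ x ≤ L * (x ⬝ᵥ x) := by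
  have hle : A ≤ algebraMap ℝ _ L := le_algebraMap_of_spectrum_le <| by
    rw [hA.spectrum_real_eq_range_eigenvalues]
    rintro _ ⟨i, rfl⟩
    exact hL i
  simpa [sub_mulVec, Algebra.algebraMap_eq_smul_one, smul_mulVec] using
    (le_iff.mp hle).dotProduct_mulVec_nonneg x

end Matrix.IsHermitian

namespace SimpleGraph

variable {V : Type*} [Fintype V] [DecidableEq V] (G : SimpleGraph V)

theorem two_le_cliqueNum_of_adj {u v : V} (huv : G.Adj u v) : 2 ≤ G.cliqueNum := by
  have hc : G.IsClique (({u, v} : Finset V) : Set V) := by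
    rw [coe_pair]
    exact isClique_pair.mpr fun _ => huv
  simpa [card_pair huv.ne] using IsClique.card_le_cliqueNum (tc := hc)

variable [DecidableRel G.Adj]

theorem trace_adjMatrix_sq {α : Type*} [Semiring α] :
    (G.adjMatrix α ^ 2).trace = Fintype.card G.Dart := by
  simp only [sq, trace, diag_apply, adjMatrix_mul_self_apply_self, G.dart_card_eq_sum_degrees,
    Nat.cast_sum]

theorem trace_adjMatrix_pow_three_eq_zero {α : Type*} [Semiring α] (h : G.CliqueFree 3) :
    (G.adjMatrix α ^ 3).trace = 0 := by
  refine sum_eq_zero fun u _ => ?_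
  rw [diag_apply, pow_three, adjMatrix_mul_apply]
  refine sum_eq_zero fun a ha => ?_
  rw [adjMatrix_mul_apply]
  refine sum_eq_zero fun b hb => ?_
  rw [mem_neighborFinset] at ha hb
  have hbu : ¬ G.Adj b u := fun hbu => h {u, a, b} (is3Clique_triple_iff.mpr ⟨ha, hbu.symm, hb⟩)
  simp [hbu]

theorem sum_sq_pos_eigenvalues_adjMatrix_le (hA : (G.adjMatrix ℝ).IsHermitian)
    (h : G.CliqueFree 3) :
    ∑ i ∈ univ.filter (fun i => 0 < hA.eigenvalues i), hA.eigenvalues i ^ 2 ≤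
      (Fintype.card V : ℝ) ^ 2 / 4 := by
  cases isEmpty_or_nonempty V
  · simp
  obtain ⟨j, hj⟩ := Finite.exists_max hA.eigenvalues
  refine sum_sq_pos_le_of_sum_pow_three_eq_zero (j := j) ?_ ?_
  · simpa [G.trace_adjMatrix_pow_three_eq_zero h] using (hA.trace_pow 3).symm
  · calc ∑ i, hA.eigenvalues i ^ 2 = (Fintype.card G.Dart : ℝ) := by
          simpa [G.trace_adjMatrix_sq] using (hA.trace_pow 2).symm
      _ = 1 ⬝ᵥ G.adjMatrix ℝ *ᵥ 1 := by rw [G.natCast_card_dart_eq_dotProduct, dotProduct_comm]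
      _ ≤ hA.eigenvalues j * (1 ⬝ᵥ 1) := hA.dotProduct_mulVec_le hj 1
      _ = Fintype.card V * hA.eigenvalues j := by rw [one_dotProduct_one, mul_comm]

end SimpleGraph

theorem triangle_free_clique_bound
    {V : Type*} [Fintype V] [DecidableEq V] (G : SimpleGraph V)
    [DecidableRel G.Adj]
    (hA : (G.adjMatrix ℝ).IsHermitian)
    (htf : G.CliqueFree 3)
    (hedge : G.edgeFinset.Nonempty) :
    (Fintype.card V : ℝ) /
        ((Fintype.card V : ℝ) -
          Real.sqrt (∑ i ∈ univ.filter (fun i => 0 < hA.eigenvalues i),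
            (hA.eigenvalues i) ^ 2)) ≤ (G.cliqueNum : ℝ) := by
  obtain ⟨⟨u, v⟩, huv⟩ := hedge
  rw [SimpleGraph.mem_edgeFinset, SimpleGraph.mem_edgeSet] at huv
  have hn : (0 : ℝ) < Fintype.card V := by
    have : Nonempty V := ⟨u⟩
    exact_mod_cast Fintype.card_pos
  have hsqrt : √(∑ i ∈ univ.filter (fun i => 0 < hA.eigenvalues i), hA.eigenvalues i ^ 2) ≤
      Fintype.card V / 2 :=
    Real.sqrt_le_iff.mpr ⟨by positivity, by linarith [G.sum_sq_pos_eigenvalues_adjMatrix_le hA htf]⟩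
  calc _ ≤ (2 : ℝ) := by
        rw [div_le_iff₀ (by linarith)]
        linarith
    _ ≤ G.cliqueNum := by exact_mod_cast G.two_le_cliqueNum_of_adj huv
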